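/- Let Q ∈ ℂ[x][[T₁, T₃, T₅, …]] satisfy Q = −x/2 + ∑_{a ≥ 0} T_{2a+1}·Q^{2a+1}/a!. Then Q also satisfies ∂Q/∂T_{2a+1} = −(2/a!)·Q^{2a+1}·∂Q/∂x for every a ≥ 0. -/

import Mathlib

/- We work in `ℂ[x][[T₁, T₃, T₅, …]]`, modelled as `MvPowerSeries ℕ (Polynomial ℂ)`
where the variable with index `a : ℕ` is `T_{2a+1}`. -/

/-- The series `∑_{a ≥ 0} T_{2a+1}·Q^{2a+1}/a!`, defined coefficientwise. -/
noncomputable def rhsSum (Q : MvPowerSeries ℕ (Polynomial ℂ)) : MvPowerSeries ℕ (Polynomial ℂ) :=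
  fun σ => ∑ a ∈ σ.support,
    Polynomial.C ((a.factorial : ℂ)⁻¹) *
      MvPowerSeries.coeff (R := Polynomial ℂ) (σ - Finsupp.single a 1) (Q ^ (2*a+1))

/-- The formal partial derivative `∂/∂T_{2i+1}`. -/
noncomputable def pd (i : ℕ) (f : MvPowerSeries ℕ (Polynomial ℂ)) :
    MvPowerSeries ℕ (Polynomial ℂ) :=
  fun σ => ((σ i + 1 : ℕ) : Polynomial ℂ) *
    MvPowerSeries.coeff (R := Polynomial ℂ) (σ + Finsupp.single i 1) f

/-- The formal partial derivative `∂/∂x`, acting on coefficients. -/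
noncomputable def dX (f : MvPowerSeries ℕ (Polynomial ℂ)) : MvPowerSeries ℕ (Polynomial ℂ) :=
  fun σ => Polynomial.derivative (MvPowerSeries.coeff (R := Polynomial ℂ) σ f)

/-!
Write `W = ∑_b (2b+1) T_{2b+1} Q^{2b} / b!`. Differentiating the fixed-point equation gives
`∂Q/∂T_{2a+1} = Q^{2a+1}/a! + W ∂Q/∂T_{2a+1}` and `∂Q/∂x = -1/2 + W ∂Q/∂x`, so
`R = ∂Q/∂T_{2a+1} + (2/a!) Q^{2a+1} ∂Q/∂x` satisfies `R = W R`. Since `W` has no constant term,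
`1 - W` is a unit and `R = 0`. The infinite sums over `b` are differentiated termwise by comparing
coefficients with finite partial sums.
-/

open MvPowerSeries Finsupp
open scoped Nat
open scoped Polynomial

namespace MvPowerSeries

variable {ι R : Type*} [CommSemiring R]

-- The series `∑_b X b * F b`; its coefficient at `σ` only involves the `b ∈ σ.support`.
noncomputable def sumXMul (F : ι → MvPowerSeries ι R) : MvPowerSeries ι R :=
  fun σ => ∑ b ∈ σ.support, coeff (σ - single b 1) (F b)

theorem coeff_sumXMul (F : ι → MvPowerSeries ι R) (σ : ι →₀ ℕ) :
    coeff σ (sumXMul F) = ∑ b ∈ σ.support, coeff (σ - single b 1) (F b) :=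
  rfl

theorem coeff_sumXMul_of_support_subset (F : ι → MvPowerSeries ι R) {σ : ι →₀ ℕ}
    {N : Finset ι} (hσ : σ.support ⊆ N) :
    coeff σ (sumXMul F) = coeff σ (∑ b ∈ N, X b * F b) := by
  classical
  simp only [map_sum, X_def, coeff_monomial_mul, one_mul, single_le_iff, Nat.one_le_iff_ne_zero,
    ← Finsupp.mem_support_iff, Finset.sum_ite_mem, Finset.inter_eq_right.mpr hσ, coeff_sumXMul]

theorem constantCoeff_sumXMul (F : ι → MvPowerSeries ι R) : constantCoeff (sumXMul F) = 0 := by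
  rw [← coeff_zero_eq_constantCoeff_apply, coeff_sumXMul, support_zero, Finset.sum_empty]

theorem sumXMul_mul (F : ι → MvPowerSeries ι R) (g : MvPowerSeries ι R) :
    sumXMul F * g = sumXMul (fun b => F b * g) := by
  ext σ : 1
  classical
  simp_rw [coeff_sumXMul_of_support_subset _ subset_rfl, ← mul_assoc, ← Finset.sum_mul, coeff_mul]
  refine Finset.sum_congr rfl fun p hp => ?_
  rw [coeff_sumXMul_of_support_subset F
    (support_mono (Finset.HasAntidiagonal.antidiagonal.fst_le hp))]

theorem pderiv_sumXMul [DecidableEq ι] (i : ι) (F : ι → MvPowerSeries ι R) :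
    pderiv R i (sumXMul F) = F i + sumXMul (fun b => pderiv R i (F b)) := by
  ext σ : 1
  set N := (σ + single i 1).support
  have hσN : σ.support ⊆ N := support_mono le_self_add
  have hiN : i ∈ N := by simp [N]
  calc coeff σ (pderiv R i (sumXMul F)) = coeff σ (pderiv R i (∑ b ∈ N, X b * F b)) := by
        rw [coeff_pderiv, coeff_pderiv, coeff_sumXMul_of_support_subset F subset_rfl]
    _ = coeff σ (F i + ∑ b ∈ N, X b * pderiv R i (F b)) := by
        simp [Derivation.leibniz, pderiv_X, Pi.single_apply, Finset.sum_add_distrib, hiN, add_comm]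
    _ = _ := by rw [map_add, map_add, coeff_sumXMul_of_support_subset _ hσN]

theorem eq_zero_of_eq_mul_of_constantCoeff_eq_zero {R : Type*} [CommRing R]
    {f w : MvPowerSeries ι R} (hw : constantCoeff w = 0) (h : f = w * f) : f = 0 := by
  have hunit : IsUnit (1 - w) := by
    rw [isUnit_iff_constantCoeff, map_sub, map_one, hw, sub_zero]
    exact isUnit_one
  exact hunit.mul_right_eq_zero.mp (by rw [sub_mul, one_mul, ← h, sub_self])

end MvPowerSeries

theorem pd_eq_pderiv (i : ℕ) (f : MvPowerSeries ℕ ℂ[X]) : pd i f = pderiv ℂ[X] i f := by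
  ext σ : 1
  rw [coeff_pderiv, mul_comm, ← Nat.cast_add_one]
  rfl

theorem rhsSum_eq_sumXMul (Q : MvPowerSeries ℕ ℂ[X]) :
    rhsSum Q = sumXMul (fun b => (b ! : ℂ)⁻¹ • Q ^ (2 * b + 1)) := by
  ext σ : 1
  rw [coeff_sumXMul]
  refine Finset.sum_congr rfl fun b _ => ?_
  rw [LinearMap.map_smul_of_tower, Polynomial.smul_eq_C_mul]

theorem coeff_dX (f : MvPowerSeries ℕ ℂ[X]) (σ : ℕ →₀ ℕ) :
    coeff σ (dX f) = Polynomial.derivative (coeff σ f) :=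
  rfl

theorem dX_mul (f g : MvPowerSeries ℕ ℂ[X]) : dX (f * g) = dX f * g + f * dX g := by
  ext σ : 1
  rw [map_add, coeff_dX, coeff_mul, coeff_mul, coeff_mul, map_sum, ← Finset.sum_add_distrib]
  refine Finset.sum_congr rfl fun p _ => ?_
  rw [coeff_dX, coeff_dX, Polynomial.derivative_mul]

theorem dX_C (p : ℂ[X]) : dX (C p) = C (Polynomial.derivative p) := by
  ext σ : 1
  rw [coeff_dX, coeff_C, coeff_C]
  split_ifs <;> simp

noncomputable def dXDerivation : Derivation ℂ (MvPowerSeries ℕ ℂ[X]) (MvPowerSeries ℕ ℂ[X]) where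
  toFun := dX
  map_add' f g := by ext σ : 1; simp only [coeff_dX, map_add]
  map_smul' c f := by
    ext σ : 1
    simp only [coeff_dX, RingHom.id_apply, LinearMap.map_smul_of_tower]
  map_one_eq_zero' := by ext σ : 1; simp [coeff_dX, coeff_one, apply_ite]
  leibniz' f g := by
    rw [smul_eq_mul, smul_eq_mul, add_comm, mul_comm g]
    exact dX_mul f g

theorem dXDerivation_apply (f : MvPowerSeries ℕ ℂ[X]) : dXDerivation f = dX f :=
  rfl

theorem dX_sumXMul (F : ℕ → MvPowerSeries ℕ ℂ[X]) :
    dX (sumXMul F) = sumXMul (fun b => dX (F b)) := by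
  ext σ : 1
  exact Polynomial.derivative_sum

-- `∑_b (2b+1) T_{2b+1} Q^{2b} / b!`, the derivative of `rhsSum Q` with respect to `Q`.
noncomputable def rhsSumDeriv (Q : MvPowerSeries ℕ ℂ[X]) : MvPowerSeries ℕ ℂ[X] :=
  sumXMul (fun b => ((2 * b + 1) * (b ! : ℂ)⁻¹) • Q ^ (2 * b))

theorem sumXMul_derivation_eq_rhsSumDeriv_mul (Q : MvPowerSeries ℕ ℂ[X])
    (D : Derivation ℂ (MvPowerSeries ℕ ℂ[X]) (MvPowerSeries ℕ ℂ[X])) :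
    sumXMul (fun b => D ((b ! : ℂ)⁻¹ • Q ^ (2 * b + 1))) = rhsSumDeriv Q * D Q := by
  rw [rhsSumDeriv, sumXMul_mul]
  congr 1
  funext b
  rw [D.map_smul, Derivation.leibniz_pow, Nat.add_sub_cancel, smul_eq_mul, nsmul_eq_mul,
    Algebra.smul_def, Algebra.smul_def, map_mul]
  simp only [map_add, map_mul, map_one, map_natCast, map_ofNat, Nat.cast_add, Nat.cast_mul,
    Nat.cast_one, Nat.cast_ofNat]
  ring

theorem pd_eq_of_fixedPoint {Q : MvPowerSeries ℕ ℂ[X]}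
    (hQ : Q = C (Polynomial.C (-(2⁻¹ : ℂ)) * Polynomial.X) + rhsSum Q) (a : ℕ) :
    pd a Q = (a ! : ℂ)⁻¹ • Q ^ (2 * a + 1) + rhsSumDeriv Q * pd a Q := by
  simp only [pd_eq_pderiv]
  conv_lhs => rw [hQ]
  rw [map_add, pderiv_C, zero_add, rhsSum_eq_sumXMul, pderiv_sumXMul]
  exact congrArg _ (sumXMul_derivation_eq_rhsSumDeriv_mul Q ((pderiv ℂ[X] a).restrictScalars ℂ))

theorem dX_eq_of_fixedPoint {Q : MvPowerSeries ℕ ℂ[X]}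
    (hQ : Q = C (Polynomial.C (-(2⁻¹ : ℂ)) * Polynomial.X) + rhsSum Q) :
    dX Q = C (Polynomial.C (-(2⁻¹ : ℂ))) + rhsSumDeriv Q * dX Q := by
  conv_lhs => rw [hQ]
  rw [← dXDerivation_apply, map_add, dXDerivation_apply, dXDerivation_apply, dX_C,
    rhsSum_eq_sumXMul, dX_sumXMul]
  exact congrArg₂ (· + ·) (by simp) (sumXMul_derivation_eq_rhsSumDeriv_mul Q dXDerivation)

/-- If `Q ∈ ℂ[x][[T₁,T₃,…]]` satisfies `Q = -x/2 + ∑_{a≥0} T_{2a+1}Q^{2a+1}/a!`, then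
`∂Q/∂T_{2a+1} = -(2/a!)·Q^{2a+1}·∂Q/∂x` for every `a ≥ 0`. -/
theorem stmt4 (Q : MvPowerSeries ℕ (Polynomial ℂ))
    (hQ : Q = MvPowerSeries.C (σ := ℕ) (R := Polynomial ℂ) (Polynomial.C (-(2⁻¹ : ℂ)) * Polynomial.X)
      + rhsSum Q) :
    ∀ a : ℕ, pd a Q
      = MvPowerSeries.C (σ := ℕ) (R := Polynomial ℂ) (Polynomial.C (-2 * (a.factorial : ℂ)⁻¹))
          * Q ^ (2*a+1) * dX Q := by
  intro a
  have hpd := pd_eq_of_fixedPoint hQ a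
  have hdX := dX_eq_of_fixedPoint hQ
  have hK : C (Polynomial.C (-2 * (a ! : ℂ)⁻¹)) * C (Polynomial.C (-(2⁻¹ : ℂ))) =
      algebraMap ℂ (MvPowerSeries ℕ ℂ[X]) (a ! : ℂ)⁻¹ := by
    rw [← map_mul, ← map_mul, MvPowerSeries.algebraMap_apply, Polynomial.algebraMap_eq]
    congr 2
    ring
  rw [Algebra.smul_def] at hpd
  rw [← sub_eq_zero]
  refine eq_zero_of_eq_mul_of_constantCoeff_eq_zero (w := rhsSumDeriv Q)
    (constantCoeff_sumXMul _) ?_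
  linear_combination hpd - C (Polynomial.C (-2 * (a ! : ℂ)⁻¹)) * Q ^ (2 * a + 1) * hdX -
    Q ^ (2 * a + 1) * hK
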